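/- Fix m ≥ 1 and let B_m be the weighted complete bipartite graph with vertex set {a_1,…,a_m, b_1,…,b_m} and weights w(a_i,b_j) = 1 for all i,j (including i = j) and weight 0 on all pairs within {a_1,…,a_m} and within {b_1,…,b_m}. Then every hierarchical clustering tree T on B_m in which, for each i, the leaves a_i and b_i are the two children of a common internal node satisfies rev(T) = (2/3)·(m³ − m). -/

import Mathlib

open Finset

/-- A hierarchical clustering tree: a rooted binary tree with leaves labelled by vertices. -/
inductive HC (V : Type*) where
  | leaf : V → HC V
  | node : HC V → HC V → HC V

namespace HC

variable {V : Type*}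

/-- The list of leaf labels of a tree, left to right. -/
def leafList : HC V → List V
  | .leaf v => [v]
  | .node l r => leafList l ++ leafList r

/-- The set of leaf labels of a tree. -/
def leaves [DecidableEq V] (t : HC V) : Finset V :=
  t.leafList.toFinset

/-- `t.cluster i j` is the leaf set of the subtree of `t` rooted at the least common
ancestor of the leaves `i` and `j` (i.e. `leaves(T[i ∨ j])`). -/
def cluster [DecidableEq V] : HC V → V → V → Finset V
  | .leaf v, _, _ => {v}
  | .node l r, i, j =>
    if i ∈ l.leaves ∧ j ∈ l.leaves then l.cluster i j
    else if i ∈ r.leaves ∧ j ∈ r.leaves then r.cluster i j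
    else (HC.node l r).leaves

/-- `t` is a hierarchical clustering tree on the whole vertex type `V`:
its leaves are in bijection with `V`. -/
def IsTreeOn [Fintype V] [DecidableEq V] (t : HC V) : Prop :=
  t.leafList.Nodup ∧ t.leaves = Finset.univ

/-- Sum of `f A B` over all internal nodes of the tree, where `A`, `B` are the
leaf sets of the two children of the internal node. -/
def internalSum [DecidableEq V] (f : Finset V → Finset V → ℝ) : HC V → ℝ
  | .leaf _ => 0
  | .node l r => f l.leaves r.leaves + internalSum f l + internalSum f r

/-- The list of all subtrees of a tree. -/
def subtreesList : HC V → List (HC V)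
  | .leaf v => [.leaf v]
  | .node l r => .node l r :: (subtreesList l ++ subtreesList r)

/-- Dasgupta's cost: sum over unordered pairs `{i,j}` of distinct vertices of
`w i j * |leaves(T[i ∨ j])|`. -/
noncomputable def cost [Fintype V] [DecidableEq V] (w : V → V → ℝ) (t : HC V) : ℝ :=
  (1 / 2) * ∑ p ∈ Finset.univ.offDiag, w p.1 p.2 * ((t.cluster p.1 p.2).card : ℝ)

/-- Moseley–Wang revenue: sum over unordered pairs `{i,j}` of distinct vertices of
`w i j * |nonleaves(T[i ∨ j])|`. -/
noncomputable def rev [Fintype V] [DecidableEq V] (w : V → V → ℝ) (t : HC V) : ℝ :=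
  (1 / 2) * ∑ p ∈ Finset.univ.offDiag,
    w p.1 p.2 * ((Finset.univ \ t.cluster p.1 p.2).card : ℝ)

/-- Cohen-Addad et al.'s value: the same formula as cost, used for dissimilarity weights. -/
noncomputable def val [Fintype V] [DecidableEq V] (w : V → V → ℝ) (t : HC V) : ℝ :=
  cost w t

end HC

/-- The total weight `W`: the sum of `w i j` over unordered pairs of distinct vertices. -/
noncomputable def totalWeight {V : Type*} [Fintype V] [DecidableEq V] (w : V → V → ℝ) : ℝ :=
  (1 / 2) * ∑ p ∈ Finset.univ.offDiag, w p.1 p.2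

/-- The merge cost of merging disjoint clusters `A` and `B`. -/
noncomputable def mergeCost {V : Type*} [Fintype V] [DecidableEq V] (w : V → V → ℝ) (A B : Finset V) : ℝ :=
  (B.card : ℝ) * ∑ a ∈ A, ∑ c ∈ Finset.univ \ (A ∪ B), w a c
    + (A.card : ℝ) * ∑ b ∈ B, ∑ c ∈ Finset.univ \ (A ∪ B), w b c

/-- The merge revenue of merging disjoint clusters `A` and `B`. -/
noncomputable def mergeRev {V : Type*} [Fintype V] (w : V → V → ℝ) (A B : Finset V) : ℝ :=
  ((Fintype.card V : ℝ) - (A.card : ℝ) - (B.card : ℝ)) * ∑ a ∈ A, ∑ b ∈ B, w a b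

/-- The average linkage between disjoint nonempty clusters `A` and `B`. -/
noncomputable def avgLinkage {V : Type*} (w : V → V → ℝ) (A B : Finset V) : ℝ :=
  (1 / ((A.card : ℝ) * (B.card : ℝ))) * ∑ a ∈ A, ∑ b ∈ B, w a b

/-- A matching encoded as an involution `f : V → V`: the matched pairs are the pairs
`{v, f v}` with `f v ≠ v`; its weight is the sum of weights of matched pairs. -/
noncomputable def matchingWeight {V : Type*} [Fintype V] [DecidableEq V] (w : V → V → ℝ) (f : V → V) : ℝ :=
  (1 / 2) * ∑ v ∈ Finset.univ.filter (fun v => f v ≠ v), w v (f v)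

/-- A perfect matching encoded as a fixed-point-free involution. -/
def IsPerfectMatching {V : Type*} (f : V → V) : Prop :=
  (∀ v, f (f v) = v) ∧ ∀ v, f v ≠ v


/-- The complete bipartite weighted graph `B_m`: vertices `a_1,...,a_m` (left) and
`b_1,...,b_m` (right), `w(a_i, b_j) = 1` for all `i, j`, and weight `0` within each side. -/
noncomputable def wB (m : ℕ) : (Fin m ⊕ Fin m) → (Fin m ⊕ Fin m) → ℝ :=
  fun x y =>
    match x, y with
    | Sum.inl _, Sum.inr _ => 1
    | Sum.inr _, Sum.inl _ => 1
    | _, _ => 0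

/-- The weighted graph `G_n`: vertices `a_1,...,a_n` (left) and `b_1,...,b_n` (right),
`w(a_i, b_j) = 1` for `i ≠ j`, and weight `0` on all other pairs. -/
noncomputable def wG (n : ℕ) : (Fin n ⊕ Fin n) → (Fin n ⊕ Fin n) → ℝ :=
  fun x y =>
    match x, y with
    | Sum.inl i, Sum.inr j => if i = j then 0 else 1
    | Sum.inr i, Sum.inl j => if i = j then 0 else 1
    | _, _ => 0

/-- For each `i`, the leaves `a_i` and `b_i` are the two children of a common internal node
of `t` (in either order). -/
def pairCond (n : ℕ) (t : HC (Fin n ⊕ Fin n)) : Prop :=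
  ∀ i : Fin n,
    HC.node (HC.leaf (Sum.inl i)) (HC.leaf (Sum.inr i)) ∈ t.subtreesList ∨
    HC.node (HC.leaf (Sum.inr i)) (HC.leaf (Sum.inl i)) ∈ t.subtreesList

/-! Grouping the pairs `{i, j}` by their least common ancestor turns the revenue into a sum
over internal nodes: a node with children `A`, `B` contributes `(|V| - |A ∪ B|) · w(A, B)`.
Under the pairing condition every subtree other than a leaf is a disjoint union of pairs
`{a_i, b_i}`, and for subtrees made of `k` and `l` pairs `w(A, B) = 2kl`. With `N = |V|`, the
doubled contribution `4kl (N - 2(k + l))` of a node is exactly `h(k + l) - h(k) - h(l)` for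
`h(k) = 2Nk² - (8/3)k³ - (4/3)k`, and a pair node contributes `h(1)`, so the total is `h(m)`
whatever the shape of the tree. -/

namespace HC

variable {V : Type*}

lemma mem_subtreesList_node {s l r : HC V} :
    s ∈ (node l r).subtreesList ↔
      s = node l r ∨ s ∈ l.subtreesList ∨ s ∈ r.subtreesList := by
  simp [subtreesList]

variable [DecidableEq V]

@[simp]
lemma leaves_leaf (v : V) : (leaf v).leaves = {v} := rfl

@[simp]
lemma leaves_node (l r : HC V) : (node l r).leaves = l.leaves ∪ r.leaves := by
  simp [leaves, leafList]

lemma disjoint_leaves_of_nodup {l r : HC V} (h : (node l r).leafList.Nodup) :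
    Disjoint l.leaves r.leaves := by
  rw [leafList, List.nodup_append] at h
  exact List.disjoint_toFinset_iff_disjoint.2 fun a ha hb => h.2.2 a ha a hb rfl

lemma leaves_subset_of_mem_subtreesList {s t : HC V} (h : s ∈ t.subtreesList) :
    s.leaves ⊆ t.leaves := by
  induction t with
  | leaf v => simp_all [subtreesList]
  | node l r ihl ihr =>
    rcases mem_subtreesList_node.1 h with rfl | h | h
    · rfl
    · exact (ihl h).trans (by simp)
    · exact (ihr h).trans (by simp)

lemma cluster_node_of_mem_left {l r : HC V} {i j : V} (hi : i ∈ l.leaves) (hj : j ∈ l.leaves) :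
    (node l r).cluster i j = l.cluster i j := by
  rw [cluster, if_pos ⟨hi, hj⟩]

lemma cluster_node_of_mem_right {l r : HC V} (hd : Disjoint l.leaves r.leaves) {i j : V}
    (hi : i ∈ r.leaves) (hj : j ∈ r.leaves) : (node l r).cluster i j = r.cluster i j := by
  rw [cluster, if_neg fun h => hd.notMem_of_mem_left_finset h.1 hi, if_pos ⟨hi, hj⟩]

lemma cluster_node_of_mem_left_right {l r : HC V} (hd : Disjoint l.leaves r.leaves) {i j : V}
    (hi : i ∈ l.leaves) (hj : j ∈ r.leaves) : (node l r).cluster i j = (node l r).leaves := by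
  rw [cluster, if_neg fun h => hd.notMem_of_mem_left_finset h.2 hj,
    if_neg fun h => hd.notMem_of_mem_left_finset hi h.1]

lemma cluster_node_of_mem_right_left {l r : HC V} (hd : Disjoint l.leaves r.leaves) {i j : V}
    (hi : i ∈ r.leaves) (hj : j ∈ l.leaves) : (node l r).cluster i j = (node l r).leaves := by
  rw [cluster, if_neg fun h => hd.notMem_of_mem_left_finset h.1 hi,
    if_neg fun h => hd.notMem_of_mem_left_finset hj h.2]

theorem sum_offDiag_mul_cluster (w : V → V → ℝ) (f : Finset V → ℝ) {t : HC V}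
    (ht : t.leafList.Nodup) :
    ∑ p ∈ t.leaves.offDiag, w p.1 p.2 * f (t.cluster p.1 p.2) =
      t.internalSum fun A B => f (A ∪ B) * ∑ a ∈ A, ∑ b ∈ B, (w a b + w b a) := by
  induction t with
  | leaf v => simp [internalSum]
  | node l r ihl ihr =>
    have hd := disjoint_leaves_of_nodup ht
    rw [leafList, List.nodup_append] at ht
    have hd' := disjoint_left.1 hd
    have hlr : Disjoint (l.leaves.offDiag ∪ r.leaves.offDiag) (l.leaves ×ˢ r.leaves) := by
      simp only [disjoint_left, mem_union, mem_offDiag, mem_product]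
      grind
    have hrl : Disjoint (l.leaves.offDiag ∪ r.leaves.offDiag ∪ l.leaves ×ˢ r.leaves)
        (r.leaves ×ˢ l.leaves) := by
      simp only [disjoint_left, mem_union, mem_offDiag, mem_product]
      grind
    have hoff : Disjoint l.leaves.offDiag r.leaves.offDiag := by
      simp only [disjoint_left, mem_offDiag]
      grind
    rw [leaves_node, offDiag_union hd, sum_union hrl, sum_union hlr, sum_union hoff,
      internalSum, ← ihl ht.1, ← ihr ht.2.1]
    have hll : ∑ p ∈ l.leaves.offDiag, w p.1 p.2 * f ((node l r).cluster p.1 p.2) =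
        ∑ p ∈ l.leaves.offDiag, w p.1 p.2 * f (l.cluster p.1 p.2) :=
      sum_congr rfl fun p hp => by
        rw [mem_offDiag] at hp
        rw [cluster_node_of_mem_left hp.1 hp.2.1]
    have hrr : ∑ p ∈ r.leaves.offDiag, w p.1 p.2 * f ((node l r).cluster p.1 p.2) =
        ∑ p ∈ r.leaves.offDiag, w p.1 p.2 * f (r.cluster p.1 p.2) :=
      sum_congr rfl fun p hp => by
        rw [mem_offDiag] at hp
        rw [cluster_node_of_mem_right hd hp.1 hp.2.1]
    have hcross : ∑ p ∈ l.leaves ×ˢ r.leaves, w p.1 p.2 * f ((node l r).cluster p.1 p.2) +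
        ∑ p ∈ r.leaves ×ˢ l.leaves, w p.1 p.2 * f ((node l r).cluster p.1 p.2) =
        f (l.leaves ∪ r.leaves) * ∑ a ∈ l.leaves, ∑ b ∈ r.leaves, (w a b + w b a) := by
      rw [sum_product, sum_product, sum_comm (s := r.leaves), mul_sum, ← sum_add_distrib]
      refine sum_congr rfl fun a ha => ?_
      rw [mul_sum, ← sum_add_distrib]
      refine sum_congr rfl fun b hb => ?_
      rw [cluster_node_of_mem_left_right hd ha hb, cluster_node_of_mem_right_left hd hb ha,
        leaves_node]
      ring
    rw [hll, hrr]
    linear_combination hcross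

theorem rev_eq_half_internalSum [Fintype V] (w : V → V → ℝ) {t : HC V} (ht : t.IsTreeOn) :
    rev w t = (1 / 2) * t.internalSum fun A B =>
      ((Fintype.card V : ℝ) - #(A ∪ B)) * ∑ a ∈ A, ∑ b ∈ B, (w a b + w b a) := by
  rw [← sum_offDiag_mul_cluster w (fun C => (Fintype.card V : ℝ) - #C) ht.1, ht.2, rev]
  congr 1
  refine sum_congr rfl fun p _ => ?_
  rw [card_univ_sdiff, Nat.cast_sub (card_le_univ _)]

end HC

open HC

section Pairs

variable {α : Type*} [DecidableEq α]

def IsPairNode (s : HC (α ⊕ α)) (i : α) : Prop :=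
  s = node (leaf (.inl i)) (leaf (.inr i)) ∨ s = node (leaf (.inr i)) (leaf (.inl i))

lemma IsPairNode.leaves_eq {s : HC (α ⊕ α)} {i : α} (h : IsPairNode s i) :
    s.leaves = ({i} : Finset α).disjSum {i} := by
  rcases h with rfl | rfl <;> ext (j | j) <;> simp [eq_comm]

def HasPairNodes (t : HC (α ⊕ α)) : Prop :=
  ∀ i, (.inl i ∈ t.leaves ∨ .inr i ∈ t.leaves) → ∃ s ∈ t.subtreesList, IsPairNode s i

inductive Paired : HC (α ⊕ α) → Finset α → Prop
  | pair {s : HC (α ⊕ α)} {i : α} : IsPairNode s i → Paired s {i}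
  | node {l r : HC (α ⊕ α)} {P Q : Finset α} :
      Paired l P → Paired r Q → Disjoint P Q → Paired (node l r) (P ∪ Q)

lemma Paired.leaves_eq {t : HC (α ⊕ α)} {P : Finset α} (h : Paired t P) :
    t.leaves = P.disjSum P := by
  induction h with
  | pair hs => exact hs.leaves_eq
  | node _ _ _ ihl ihr =>
    rw [leaves_node, ihl, ihr]
    ext (j | j) <;> simp

lemma not_hasPairNodes_leaf (v : α ⊕ α) : ¬HasPairNodes (leaf v) := by
  intro h
  obtain ⟨s, hs, hpair⟩ := h (v.elim id id) (by cases v <;> simp)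
  simp only [subtreesList, List.mem_singleton] at hs
  rcases hpair with rfl | rfl <;> cases hs

lemma IsPairNode.mem_leaves_of_mem_subtreesList {s t : HC (α ⊕ α)} {i : α}
    (h : IsPairNode s i) (hs : s ∈ t.subtreesList) :
    .inl i ∈ t.leaves ∧ .inr i ∈ t.leaves := by
  have := leaves_subset_of_mem_subtreesList hs
  rw [h.leaves_eq] at this
  exact ⟨this (by simp), this (by simp)⟩

lemma HasPairNodes.left_right {l r : HC (α ⊕ α)} (h : HasPairNodes (node l r))
    (hd : Disjoint l.leaves r.leaves) (hnot : ∀ i, ¬IsPairNode (node l r) i) :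
    HasPairNodes l ∧ HasPairNodes r := by
  have hd' := disjoint_left.1 hd
  constructor
  · intro i hi
    obtain ⟨s, hs, hpair⟩ := h i (by simp only [leaves_node, mem_union]; tauto)
    rcases mem_subtreesList_node.1 hs with rfl | hs | hs
    · exact absurd hpair (hnot i)
    · exact ⟨s, hs, hpair⟩
    · have := hpair.mem_leaves_of_mem_subtreesList hs
      exact (hi.elim (hd' · this.1) (hd' · this.2)).elim
  · intro i hi
    obtain ⟨s, hs, hpair⟩ := h i (by simp only [leaves_node, mem_union]; tauto)
    rcases mem_subtreesList_node.1 hs with rfl | hs | hs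
    · exact absurd hpair (hnot i)
    · have := hpair.mem_leaves_of_mem_subtreesList hs
      exact (hi.elim (hd' this.1 ·) (hd' this.2 ·)).elim
    · exact ⟨s, hs, hpair⟩

theorem exists_paired {t : HC (α ⊕ α)} (ht : t.leafList.Nodup) (h : HasPairNodes t) :
    ∃ P, Paired t P := by
  induction t with
  | leaf v => exact absurd h (not_hasPairNodes_leaf v)
  | node l r ihl ihr =>
    by_cases hpair : ∃ i, IsPairNode (node l r) i
    · obtain ⟨i, hi⟩ := hpair
      exact ⟨{i}, .pair hi⟩
    push Not at hpair
    have hd := disjoint_leaves_of_nodup ht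
    rw [leafList, List.nodup_append] at ht
    obtain ⟨hl, hr⟩ := h.left_right hd hpair
    obtain ⟨P, hP⟩ := ihl ht.1 hl
    obtain ⟨Q, hQ⟩ := ihr ht.2.1 hr
    refine ⟨P ∪ Q, .node hP hQ (disjoint_left.2 fun i hiP hiQ => ?_)⟩
    have hiL : (.inl i : α ⊕ α) ∈ l.leaves := by simp [hP.leaves_eq, hiP]
    exact disjoint_left.1 hd hiL (by simp [hQ.leaves_eq, hiQ])

end Pairs

lemma Paired.internalSum_wB {m : ℕ} (N : ℝ) {t : HC (Fin m ⊕ Fin m)} {P : Finset (Fin m)}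
    (h : Paired t P) :
    t.internalSum (fun A B => (N - #(A ∪ B)) * ∑ a ∈ A, ∑ b ∈ B, (wB m a b + wB m b a)) =
      2 * N * #P ^ 2 - 8 / 3 * #P ^ 3 - 4 / 3 * #P := by
  induction h with
  | pair hs =>
    rcases hs with rfl | rfl <;> simp [internalSum, wB] <;> ring
  | @node l r P Q hl hr hPQ ihl ihr =>
    rw [internalSum, ihl, ihr, ← leaves_node, (hl.node hr hPQ).leaves_eq, hl.leaves_eq,
      hr.leaves_eq]
    simp [sum_add_distrib, sum_disjSum, wB, card_union_of_disjoint hPQ]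
    ring

theorem stmt17_general (m : ℕ)
    (t : HC (Fin m ⊕ Fin m)) (ht : t.IsTreeOn) (hp : pairCond m t) :
    HC.rev (wB m) t = (2 / 3) * ((m : ℝ) ^ 3 - (m : ℝ)) := by
  have hpairs : HasPairNodes t := fun i _ =>
    (hp i).elim (fun h => ⟨_, h, .inl rfl⟩) (fun h => ⟨_, h, .inr rfl⟩)
  obtain ⟨P, hP⟩ := exists_paired ht.1 hpairs
  have hP_univ : P = univ := by
    have := hP.leaves_eq.symm.trans ht.2
    rw [← univ_disjSum_univ, disjSum_inj] at this
    exact this.1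
  rw [rev_eq_half_internalSum _ ht, hP.internalSum_wB, hP_univ]
  simp [Fintype.card_sum]
  ring

/-- On the complete bipartite graph `B_m`, every hierarchical clustering tree in which,
for each `i`, the leaves `a_i` and `b_i` are the two children of a common internal node
has revenue `(2/3)·(m³ − m)`. -/
theorem stmt17 (m : ℕ) (hm : 1 ≤ m)
    (t : HC (Fin m ⊕ Fin m)) (ht : t.IsTreeOn) (hp : pairCond m t) :
    HC.rev (wB m) t = (2 / 3) * ((m : ℝ) ^ 3 - (m : ℝ)) :=
  stmt17_general m t ht hp
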